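/- For all real numbers a, b, the following polynomial identity holds: 5(Δ₆₁−Δ₁₆) + 4(Δ₆₂−Δ₂₆) + 3(Δ₆₃−Δ₃₆) + 2(Δ₆₄−Δ₄₆) = −(a+b−1)(1−a−b+2ab)·L(a,b), where L(a,b) = −4a + 5a² − 4a³ − 4b + 24ab − 50a²b + 36a³b + 5b² − 50ab² + 122a²b² − 84a³b² − 4b³ + 36ab³ − 84a²b³ + 56a³b³. -/
import Mathlib


noncomputable section

/-- Probability that the set ends 6-0 for the player serving first. -/
def S60 (x1 y2 : ℝ) : ℝ := (x1*y2)^3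
def S61 (x1 x2 y1 y2 : ℝ) : ℝ := 3*x1^3*x2*y2^3 + 3*x1^4*y1*y2^2
def S62 (x1 x2 y1 y2 : ℝ) : ℝ :=
  12*x1^3*x2*y1*y2^3 + 6*x1^2*x2^2*y2^4 + 3*x1^4*y1^2*y2^2
def S63 (x1 x2 y1 y2 : ℝ) : ℝ :=
  24*x1^3*x2^2*y1*y2^3 + 24*x1^4*x2*y1^2*y2^2 + 4*x1^2*x2^3*y2^4 + 4*x1^5*y1^3*y2
def S64 (x1 x2 y1 y2 : ℝ) : ℝ :=
  60*x1^3*x2^2*y1^2*y2^3 + 40*x1^2*x2^3*y1*y2^4 + 20*x1^4*x2*y1^3*y2^2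
    + 5*x1*x2^4*y2^5 + x1^5*y1^4*y2
def S75 (x1 x2 y1 y2 : ℝ) : ℝ :=
  100*x1^3*x2^3*y1^2*y2^4 + 100*x1^4*x2^2*y1^3*y2^3 + 25*x1^2*x2^4*y1*y2^5
    + 25*x1^5*x2*y1^4*y2^2 + x1*x2^5*y2^6 + x1^6*y1^5*y2

/- Set-score probabilities when A serves first, as functions of the
   game-winning-on-serve probabilities a (for A) and b (for B). -/
def SA60 (a b : ℝ) : ℝ := S60 a (1-b)
def SA06 (a b : ℝ) : ℝ := ((1-a)*b)^3
def SA61 (a b : ℝ) : ℝ := S61 a (1-a) b (1-b)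
def SA16 (a b : ℝ) : ℝ := S61 (1-a) a (1-b) b
def SA62 (a b : ℝ) : ℝ := S62 a (1-a) b (1-b)
def SA26 (a b : ℝ) : ℝ := S62 (1-a) a (1-b) b
def SA63 (a b : ℝ) : ℝ := S63 a (1-a) b (1-b)
def SA36 (a b : ℝ) : ℝ := S63 (1-a) a (1-b) b
def SA64 (a b : ℝ) : ℝ := S64 a (1-a) b (1-b)
def SA46 (a b : ℝ) : ℝ := S64 (1-a) a (1-b) b
def SA75 (a b : ℝ) : ℝ := S75 a (1-a) b (1-b)
def SA57 (a b : ℝ) : ℝ := S75 (1-a) a (1-b) b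
def SA66 (a b : ℝ) : ℝ :=
  1 - (SA60 a b + SA06 a b + SA61 a b + SA16 a b + SA62 a b + SA26 a b
        + SA63 a b + SA36 a b + SA64 a b + SA46 a b)
    - SA75 a b - SA57 a b

/- Probabilities that a set with first server A (resp. B) ends after exactly
   k games.  When B serves first the roles of a and b are interchanged. -/
def pi6A (a b : ℝ) : ℝ := SA60 a b + SA06 a b
def pi7A (a b : ℝ) : ℝ := SA61 a b + SA16 a b
def pi8A (a b : ℝ) : ℝ := SA62 a b + SA26 a b
def pi9A (a b : ℝ) : ℝ := SA63 a b + SA36 a b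
def pi10A (a b : ℝ) : ℝ := SA64 a b + SA46 a b
def pi12A (a b : ℝ) : ℝ := SA75 a b + SA57 a b
def pi13A (a b : ℝ) : ℝ := SA66 a b

def pi6B (a b : ℝ) : ℝ := pi6A b a
def pi7B (a b : ℝ) : ℝ := pi7A b a
def pi8B (a b : ℝ) : ℝ := pi8A b a
def pi9B (a b : ℝ) : ℝ := pi9A b a
def pi10B (a b : ℝ) : ℝ := pi10A b a
def pi12B (a b : ℝ) : ℝ := pi12A b a
def pi13B (a b : ℝ) : ℝ := pi13A b a

/- Δ_{nm} = S^A_{nm} − S^B_{mn}, where S^B_{nm}(a,b) = S^A_{nm}(b,a). -/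
def D61 (a b : ℝ) : ℝ := SA61 a b - SA16 b a
def D16 (a b : ℝ) : ℝ := SA16 a b - SA61 b a
def D62 (a b : ℝ) : ℝ := SA62 a b - SA26 b a
def D26 (a b : ℝ) : ℝ := SA26 a b - SA62 b a
def D63 (a b : ℝ) : ℝ := SA63 a b - SA36 b a
def D36 (a b : ℝ) : ℝ := SA36 a b - SA63 b a
def D64 (a b : ℝ) : ℝ := SA64 a b - SA46 b a
def D46 (a b : ℝ) : ℝ := SA46 a b - SA64 b a

/-- The symmetric polynomial appearing as the last factor. -/
def L (a b : ℝ) : ℝ :=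
  -4*a + 5*a^2 - 4*a^3 - 4*b + 24*a*b - 50*a^2*b + 36*a^3*b + 5*b^2
    - 50*a*b^2 + 122*a^2*b^2 - 84*a^3*b^2 - 4*b^3 + 36*a*b^3 - 84*a^2*b^3
    + 56*a^3*b^3

theorem margin_factorization (a b : ℝ) :
    5*(D61 a b - D16 a b) + 4*(D62 a b - D26 a b)
      + 3*(D63 a b - D36 a b) + 2*(D64 a b - D46 a b)
      = -(a+b-1)*(1-a-b+2*a*b)*L a b := by
  unfold D61 D16 D62 D26 D63 D36 D64 D46 SA61 SA16 SA62 SA26 SA63 SA36 SA64 SA46 S61 S62 S63 S64 L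
  ring
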